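/- arXiv:1303.0041 — 3 statements merged into one kernel-verified Lean document; each statement's English description precedes it below -/
import Mathlib

section
/- The cycle C_{0111} admits no majority polymorphism: there is no ternary function f : V³ → V that is a homomorphism from C_{0111}³ to C_{0111} and satisfies f(x,x,y) = f(x,y,x) = f(y,x,x) = x for all x, y. -/
/-!
The triple `(3, 2, 0)` is coordinatewise adjacent to `(2, 2, 0)`, `(0, 1, 1)` and `(0, 1, 0)`,
on which a majority operation takes the values `2`, `1` and `0`. A majority polymorphism would
therefore send `(3, 2, 0)` to a common neighbour of `0`, `1` and `2`, and there is none: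
the only neighbours of the loopless vertex `1` are `0` and `2`, which are not adjacent.
-/

/-- Edge relation of `C_{0111}`: the 4-cycle on `ZMod 4` (vertices 1,2,3,0=4 in
cyclic order) with loops everywhere except at vertex 1. -/
def C0111 (i j : ZMod 4) : Prop := j = i + 1 ∨ j = i - 1 ∨ (i = j ∧ i ≠ 1)

instance : DecidableRel C0111 := fun i j => by
  unfold C0111; infer_instance

theorem not_exists_common_neighbor_zero_one_two :
    ¬ ∃ a, C0111 a 0 ∧ C0111 a 1 ∧ C0111 a 2 := by
  decide

theorem stmt_6 :
    ¬ ∃ f : ZMod 4 → ZMod 4 → ZMod 4 → ZMod 4,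
      (∀ x₁ x₂ x₃ y₁ y₂ y₃, C0111 x₁ y₁ → C0111 x₂ y₂ → C0111 x₃ y₃ →
        C0111 (f x₁ x₂ x₃) (f y₁ y₂ y₃)) ∧
      (∀ x y, f x x y = x ∧ f x y x = x ∧ f y x x = x) := by
  rintro ⟨f, hpol, hmaj⟩
  refine not_exists_common_neighbor_zero_one_two ⟨f 3 2 0, ?_, ?_, ?_⟩
  · simpa only [(hmaj 0 1).2.1] using hpol 3 2 0 0 1 0 (by decide) (by decide) (by decide)
  · simpa only [(hmaj 1 0).2.2] using hpol 3 2 0 0 1 1 (by decide) (by decide) (by decide)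
  · simpa only [(hmaj 2 0).1] using hpol 3 2 0 2 2 0 (by decide) (by decide) (by decide)
end

section
/- The cycle C_{0111} has an idempotent ternary polymorphism f and an element c such that each of the three binary functions u,v ↦ f(c,u,v), u,v ↦ f(u,c,v) and u,v ↦ f(u,v,c) is surjective onto the vertex set. -/
def IsMajority {α : Type*} (a x y z : α) : Prop :=
  (x = a ∧ y = a) ∨ (x = a ∧ z = a) ∨ (y = a ∧ z = a)

instance {α : Type*} [DecidableEq α] (a x y z : α) : Decidable (IsMajority a x y z) := by
  unfold IsMajority; infer_instance

theorem IsMajority.rel {α : Type*} {R : α → α → Prop} {a b x₁ x₂ x₃ y₁ y₂ y₃ : α}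
    (ha : IsMajority a x₁ x₂ x₃) (hb : IsMajority b y₁ y₂ y₃)
    (h₁ : R x₁ y₁) (h₂ : R x₂ y₂) (h₃ : R x₃ y₃) : R a b := by
  unfold IsMajority at ha hb
  rcases ha with ⟨rfl, rfl⟩ | ⟨rfl, rfl⟩ | ⟨rfl, rfl⟩ <;>
    rcases hb with ⟨rfl, rfl⟩ | ⟨rfl, rfl⟩ | ⟨rfl, rfl⟩ <;> assumption

theorem C0111.symm {i j : ZMod 4} (h : C0111 i j) : C0111 j i := by
  revert i j; decide

theorem C0111_three_left {i : ZMod 4} (hi : i ≠ 1) : C0111 3 i := by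
  revert i; decide

theorem C0111_three_right {i : ZMod 4} (hi : i ≠ 1) : C0111 i 3 := by
  revert i; decide

theorem eq_zero_or_eq_two_of_C0111_one {i : ZMod 4} (h : C0111 1 i) : i = 0 ∨ i = 2 := by
  revert i; decide

def evenMajority (x y z : ZMod 4) : ZMod 4 :=
  if IsMajority 0 x y z then 0
  else if IsMajority 2 x y z then 2
  else if x = 1 ∧ y = 1 ∧ z = 1 then 1
  else 3

theorem evenMajority_self (x : ZMod 4) : evenMajority x x x = x := by
  revert x; decide

theorem evenMajority_comm₁₂ (x y z : ZMod 4) : evenMajority x y z = evenMajority y x z := by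
  revert x y z; decide

theorem evenMajority_comm₂₃ (x y z : ZMod 4) : evenMajority x y z = evenMajority x z y := by
  revert x y z; decide

theorem evenMajority_eq_three_or_isMajority (x y z : ZMod 4) :
    evenMajority x y z = 3 ∨ IsMajority (evenMajority x y z) x y z := by
  unfold evenMajority
  split_ifs with h₀ h₂ h₁
  · exact .inr h₀
  · exact .inr h₂
  · obtain ⟨rfl, rfl, rfl⟩ := h₁
    exact .inr (.inl ⟨rfl, rfl⟩)
  · exact .inl rfl

theorem evenMajority_eq_one {x y z : ZMod 4} (h : evenMajority x y z = 1) :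
    x = 1 ∧ y = 1 ∧ z = 1 := by
  unfold evenMajority at h
  split_ifs at h with h₀ h₂ h₁ <;> first | exact h₁ | exact absurd h (by decide)

theorem evenMajority_ne_three {x y z : ZMod 4} (hx : x = 0 ∨ x = 2) (hy : y = 0 ∨ y = 2)
    (hz : z = 0 ∨ z = 2) : evenMajority x y z ≠ 3 := by
  rcases hx with rfl | rfl <;> rcases hy with rfl | rfl <;> rcases hz with rfl | rfl <;> decide

theorem evenMajority_ne_one_of_eq_three {x₁ x₂ x₃ y₁ y₂ y₃ : ZMod 4}
    (h₁ : C0111 x₁ y₁) (h₂ : C0111 x₂ y₂) (h₃ : C0111 x₃ y₃)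
    (hx : evenMajority x₁ x₂ x₃ = 3) : evenMajority y₁ y₂ y₃ ≠ 1 := by
  intro hy
  obtain ⟨rfl, rfl, rfl⟩ := evenMajority_eq_one hy
  exact evenMajority_ne_three (eq_zero_or_eq_two_of_C0111_one h₁.symm)
    (eq_zero_or_eq_two_of_C0111_one h₂.symm) (eq_zero_or_eq_two_of_C0111_one h₃.symm) hx

theorem evenMajority_C0111 {x₁ x₂ x₃ y₁ y₂ y₃ : ZMod 4}
    (h₁ : C0111 x₁ y₁) (h₂ : C0111 x₂ y₂) (h₃ : C0111 x₃ y₃) :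
    C0111 (evenMajority x₁ x₂ x₃) (evenMajority y₁ y₂ y₃) := by
  rcases evenMajority_eq_three_or_isMajority x₁ x₂ x₃ with hx | hx
  · rw [hx]
    exact C0111_three_left (evenMajority_ne_one_of_eq_three h₁ h₂ h₃ hx)
  rcases evenMajority_eq_three_or_isMajority y₁ y₂ y₃ with hy | hy
  · rw [hy]
    exact C0111_three_right (evenMajority_ne_one_of_eq_three h₁.symm h₂.symm h₃.symm hy)
  exact hx.rel hy h₁ h₂ h₃

theorem evenMajority_one_surjective :
    Function.Surjective (fun p : ZMod 4 × ZMod 4 => evenMajority 1 p.1 p.2) := by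
  intro v; revert v; decide

theorem stmt_7 :
    ∃ (f : ZMod 4 → ZMod 4 → ZMod 4 → ZMod 4) (c : ZMod 4),
      (∀ x, f x x x = x) ∧
      (∀ x₁ x₂ x₃ y₁ y₂ y₃, C0111 x₁ y₁ → C0111 x₂ y₂ → C0111 x₃ y₃ →
        C0111 (f x₁ x₂ x₃) (f y₁ y₂ y₃)) ∧
      Function.Surjective (fun p : ZMod 4 × ZMod 4 => f c p.1 p.2) ∧
      Function.Surjective (fun p : ZMod 4 × ZMod 4 => f p.1 c p.2) ∧
      Function.Surjective (fun p : ZMod 4 × ZMod 4 => f p.1 p.2 c) := by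
  refine ⟨evenMajority, 1, evenMajority_self, fun _ _ _ _ _ _ => evenMajority_C0111,
    evenMajority_one_surjective, ?_, ?_⟩
  · simpa only [evenMajority_comm₁₂] using evenMajority_one_surjective
  · simpa only [evenMajority_comm₁₂, evenMajority_comm₂₃] using evenMajority_one_surjective
end

section
/- Let m ≥ 5 be odd and consider the reflexive m-cycle on ZMod m. For every subset S of ZMod m: every vertex u has some element of S at circular distance at most (m−3)/2 from u, if and only if S contains two elements at circular distance at least 2 from each other. -/
/-!
Write `m = 2a + 1`, so that `(m - 3) / 2 = a - 1` and every circular distance is at most `a`.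
The only vertices at distance `a` from `u` are its two antipodes `u + a` and `u - a`, and these are
adjacent because `2a = -1` in `ZMod m`. Hence a vertex at distance `≥ a` from all of `S` forces
`S` into an edge; conversely if `S` lies in an edge `{v, v + 1}` (which is what having no two
points at distance `≥ 2` means once `m ≥ 4`), then `v - a` is at distance `a` from all of `S`.
-/

/-- Circular distance on `ZMod m`. -/
def cdist {m : ℕ} (u v : ZMod m) : ℕ := min (u - v).val (v - u).val

section General

variable {m : ℕ}

theorem cdist_comm (u v : ZMod m) : cdist u v = cdist v u :=
  min_comm _ _

@[simp]
theorem cdist_self (u : ZMod m) : cdist u u = 0 := by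
  simp [cdist]

variable [NeZero m]

theorem cdist_eq_min (u v : ZMod m) : cdist u v = min (v - u).val (m - (v - u).val) := by
  rw [cdist, ← neg_sub, ZMod.neg_val, min_comm]
  split_ifs with h
  · simp [h]
  · rfl

theorem cdist_le_half (u v : ZMod m) : cdist u v ≤ m / 2 := by
  rw [cdist_eq_min]
  omega

theorem cdist_add_natCast {k : ℕ} (hk : 2 * k ≤ m) (u : ZMod m) : cdist u (u + k) = k := by
  have hm : 0 < m := Nat.pos_of_neZero m
  rw [cdist_eq_min, add_sub_cancel_left, ZMod.val_cast_of_lt (by omega)]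
  omega

theorem cdist_sub_natCast {k : ℕ} (hk : 2 * k ≤ m) (u : ZMod m) : cdist u (u - k) = k := by
  rw [cdist_comm]
  simpa using cdist_add_natCast hk (u - k)

theorem cdist_eq_iff {k : ℕ} (hk : 2 * k ≤ m) {u v : ZMod m} :
    cdist u v = k ↔ v = u + k ∨ v = u - k := by
  refine ⟨fun h => ?_, ?_⟩
  · have hv : v = u + ((v - u).val : ℕ) := by rw [ZMod.natCast_zmod_val, add_sub_cancel]
    rw [cdist_eq_min] at h
    have hval := ZMod.val_lt (v - u)
    rcases (by omega : (v - u).val = k ∨ (v - u).val = m - k) with h' | h'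
    · exact .inl (by rwa [h'] at hv)
    · right
      rwa [h', Nat.cast_sub (by omega), ZMod.natCast_self, zero_sub, ← sub_eq_add_neg] at hv
  · rintro (rfl | rfl)
    · exact cdist_add_natCast hk u
    · exact cdist_sub_natCast hk u

theorem cdist_le_one_iff (hm : 2 ≤ m) {u v : ZMod m} :
    cdist u v ≤ 1 ↔ v = u ∨ v = u + 1 ∨ v = u - 1 := by
  have h0 := cdist_eq_iff (k := 0) (by omega) (u := u) (v := v)
  have h1 := cdist_eq_iff (k := 1) (by omega) (u := u) (v := v)
  simp only [Nat.cast_zero, add_zero, sub_zero, or_self, Nat.cast_one] at h0 h1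
  rw [Nat.le_one_iff_eq_zero_or_eq_one, h0, h1]

theorem exists_subset_pair_of_forall_cdist_lt_two (hm : 4 ≤ m) {S : Set (ZMod m)}
    (hS : ∀ s ∈ S, ∀ t ∈ S, cdist s t < 2) : ∃ v, ∀ s ∈ S, s = v ∨ s = v + 1 := by
  rcases S.eq_empty_or_nonempty with rfl | ⟨s₀, hs₀⟩
  · exact ⟨0, by simp⟩
  have near : ∀ s ∈ S, s = s₀ ∨ s = s₀ + 1 ∨ s = s₀ - 1 := fun s hs =>
    (cdist_le_one_iff (by omega)).1 (Nat.lt_succ_iff.1 (hS s₀ hs₀ s hs))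
  have not_both : s₀ - 1 ∈ S → s₀ + 1 ∉ S := fun hl hr => by
    have h2 : cdist (s₀ - 1) (s₀ + 1) = 2 := by
      rw [show s₀ + 1 = s₀ - 1 + ((2 : ℕ) : ZMod m) by push_cast; ring]
      exact cdist_add_natCast (by omega) _
    exact absurd (hS _ hl _ hr) (by omega)
  by_cases hr : s₀ + 1 ∈ S
  · refine ⟨s₀, fun s hs => ?_⟩
    rcases near s hs with h | h | rfl
    exacts [.inl h, .inr h, absurd hr (not_both hs)]
  · refine ⟨s₀ - 1, fun s hs => ?_⟩
    rcases near s hs with rfl | rfl | h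
    exacts [.inr (sub_add_cancel _ _).symm, absurd hs hr, .inl h]

end General

section Odd

variable {m a : ℕ} (h : m = 2 * a + 1)
include h

theorem two_mul_natCast_add_one_eq_zero : 2 * (a : ZMod m) + 1 = 0 := by
  rw [← ZMod.natCast_self m, h]
  push_cast
  ring

theorem eq_add_or_eq_sub_of_le_cdist {u v : ZMod m} (hle : a ≤ cdist u v) :
    v = u + a ∨ v = u - a := by
  have : NeZero m := ⟨by omega⟩
  have := cdist_le_half u v
  exact (cdist_eq_iff (by omega)).1 (by omega)

theorem cdist_le_one_of_le_cdist_of_le_cdist (ha : 0 < a) {u s t : ZMod m} (hs : a ≤ cdist u s)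
    (ht : a ≤ cdist u t) : cdist s t ≤ 1 := by
  have : NeZero m := ⟨by omega⟩
  have h0 := two_mul_natCast_add_one_eq_zero h
  have adjacent : cdist s t = 1 ↔ t = s + 1 ∨ t = s - 1 := by
    simpa using cdist_eq_iff (k := 1) (by omega : 2 * 1 ≤ m) (u := s) (v := t)
  rcases eq_add_or_eq_sub_of_le_cdist h hs with rfl | rfl <;>
    rcases eq_add_or_eq_sub_of_le_cdist h ht with rfl | rfl
  · simp
  · exact (adjacent.2 (.inl (by linear_combination -h0))).le
  · exact (adjacent.2 (.inr (by linear_combination h0))).le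
  · simp

theorem cdist_sub_natCast_of_eq_or_eq_add_one {v s : ZMod m} (hs : s = v ∨ s = v + 1) :
    cdist (v - (a : ZMod m)) s = a := by
  have : NeZero m := ⟨by omega⟩
  have h0 := two_mul_natCast_add_one_eq_zero h
  refine (cdist_eq_iff (by omega)).2 ?_
  rcases hs with rfl | rfl
  · exact .inl (sub_add_cancel _ _).symm
  · exact .inr (by linear_combination h0)

end Odd

theorem stmt_9 (m : ℕ) (hm : 5 ≤ m) (ho : Odd m) (S : Finset (ZMod m)) :
    (∀ u : ZMod m, ∃ s ∈ S, cdist u s ≤ (m - 3) / 2) ↔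
      ∃ s ∈ S, ∃ t ∈ S, 2 ≤ cdist s t := by
  obtain ⟨a, ha⟩ := ho
  have : NeZero m := ⟨by omega⟩
  have hk : (m - 3) / 2 = a - 1 := by omega
  rw [hk]
  constructor
  · intro H
    by_contra! hS
    obtain ⟨v, hv⟩ := exists_subset_pair_of_forall_cdist_lt_two (S := (S : Set (ZMod m)))
      (by omega) hS
    obtain ⟨s, hs, hle⟩ := H (v - a)
    have := cdist_sub_natCast_of_eq_or_eq_add_one ha (hv s hs)
    omega
  · rintro ⟨s, hs, t, ht, hst⟩ u
    by_contra! hfar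
    have hs' := hfar s hs
    have ht' := hfar t ht
    have := cdist_le_one_of_le_cdist_of_le_cdist ha (by omega)
      (by omega : a ≤ cdist u s) (by omega : a ≤ cdist u t)
    omega
end
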